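/- Let A be a closed densely defined operator on H and B ∈ B(H) with 0 isolated in σ(B), vanishing quasinilpotent part, and orthogonal Riesz projection P at 0, Q = I - P. Assume there is γ ≥ 0 such that ⟨Aφ, Bφ⟩ + ⟨Bφ, Aφ⟩ ≥ -γ‖Qφ‖² for all φ ∈ D(A). Then for each z ∈ ℂ \ {0} there exist δ₀ > 0 and C_z ≥ 0 such that for all 0 < δ < δ₀ for which B + δ(A - z) is boundedly invertible, ‖Q(B + δ(A - z))⁻¹‖ ≤ C_z. -/
import Mathlib


/-!
STATEMENT 13: `A` closed densely defined, `B` bounded with `0` isolated in `σ(B)`,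
vanishing quasinilpotent part and orthogonal Riesz projection `P`, `Q = I - P`.  If
`⟨Aφ, Bφ⟩ + ⟨Bφ, Aφ⟩ ≥ -γ‖Qφ‖²` on `D(A)`, then for each `z ≠ 0` there are `δ₀ > 0`
and `C_z ≥ 0` with `‖Q (B + δ(A - z))⁻¹‖ ≤ C_z` for all `0 < δ < δ₀` for which the
inverse exists.
-/

open scoped ComplexInnerProductSpace

/-- The operator `B + δ (A - z)` on the domain of `A`. -/
noncomputable def opDelta {H : Type*} [NormedAddCommGroup H] [InnerProductSpace ℂ H]
    (A : H →ₗ.[ℂ] H) (B : H →L[ℂ] H) (δ : ℝ) (z : ℂ) : H →ₗ.[ℂ] H where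
  domain := A.domain
  toFun := (B : H →ₗ[ℂ] H).comp A.domain.subtype
      + (δ : ℂ) • (A.toFun - z • A.domain.subtype)

def IsBddInverseOn {H : Type*} [NormedAddCommGroup H] [InnerProductSpace ℂ H]
    (T : H →ₗ.[ℂ] H) (R : H →L[ℂ] H) : Prop :=
  (∀ x : H, ∃ hx : R x ∈ T.domain, T ⟨R x, hx⟩ = x) ∧ ∀ y : T.domain, R (T y) = y

set_option maxHeartbeats 1000000 in
theorem uniform_bound_Q_resolvent {H : Type*} [NormedAddCommGroup H]
    [InnerProductSpace ℂ H] [CompleteSpace H]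
    (A : H →ₗ.[ℂ] H) (hAclosed : A.IsClosed) (hAdense : Dense (A.domain : Set H))
    (B : H →L[ℂ] H)
    -- `P` is the Riesz projection of `B` at the isolated point `0 ∈ σ(B)`,
    -- orthogonal, with vanishing quasinilpotent part and `QBQ` invertible on `QH`:
    (P : H →L[ℂ] H) (hidem : P ∘L P = P) (hPsa : IsSelfAdjoint P)
    (hPB : P ∘L B = 0) (hBP : B ∘L P = 0)
    (hQinv : IsUnit (B + P))
    -- lower bound on the hermitianized anticommutator form:
    (γ : ℝ) (hγ : 0 ≤ γ)
    (hform : ∀ φ : A.domain,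
      -γ * ‖(φ : H) - P (φ : H)‖ ^ 2 ≤
        (⟪A φ, B (φ : H)⟫ + ⟪B (φ : H), A φ⟫).re) :
    ∀ z : ℂ, z ≠ 0 → ∃ δ₀ > (0 : ℝ), ∃ C ≥ (0 : ℝ),
      ∀ δ : ℝ, 0 < δ → δ < δ₀ →
        ∀ R : H →L[ℂ] H, IsBddInverseOn (opDelta A B δ z) R →
          ‖(1 - P) ∘L R‖ ≤ C := by
  intro z hz
  obtain ⟨u, hu⟩ := hQinv
  set S : H →L[ℂ] H := (u⁻¹ : (H →L[ℂ] H)ˣ).val with hS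
  set M : ℝ := ‖S‖ with hM
  have hM0 : (0 : ℝ) ≤ M := norm_nonneg _
  have hSBP : ∀ x : H, S ((B + P) x) = x := by
    intro x
    calc S ((B + P) x) = (u⁻¹.val * u.val) x := by rw [hu]; rfl
      _ = x := by rw [u.inv_mul]; rfl
  have hkey : ∀ x : H, S (B x) = x - P x := by
    intro x
    have h1 : (B + P) (x - P x) = B x := by
      have hB' : B (P x) = 0 := by
        have := congrArg (fun T : H →L[ℂ] H => T x) hBP; simpa using this
      have hP' : P (P x) = P x := by
        have := congrArg (fun T : H →L[ℂ] H => T x) hidem; simpa using this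
      simp [ContinuousLinearMap.add_apply, map_sub, hB', hP']
    rw [← h1, hSBP]
  have hQle : ∀ x : H, ‖x - P x‖ ≤ M * ‖B x‖ := by
    intro x
    rw [← hkey]
    exact S.le_opNorm (B x)
  have hPBz : ∀ x : H, P (B x) = 0 := by
    intro x
    have := congrArg (fun T : H →L[ℂ] H => T x) hPB; simpa using this
  have hsymm : ∀ x y : H, ⟪P x, y⟫ = ⟪x, P y⟫ := fun x y => hPsa.isSymmetric x y
  refine ⟨1 / (2 * (γ * M ^ 2 + 2 * ‖z‖ * M + 1)), by positivity, 2 * M, by positivity, ?_⟩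
  intro δ hδ0 hδ1 R hR
  refine ContinuousLinearMap.opNorm_le_bound _ (by positivity) ?_
  intro η
  obtain ⟨hx, hTx⟩ := hR.1 η
  set φ : A.domain := ⟨R η, hx⟩ with hφ
  set p : H := R η with hp
  set b : H := B p with hb
  set a : H := A φ with ha
  set q : H := p - P p with hq
  have hTx' : b + (δ : ℂ) • (a - z • p) = η := by
    rw [← hTx]; rfl
  set w : H := (δ : ℂ) • (a - z • p) with hw
  have hexp : ‖η‖ ^ 2 = ‖b‖ ^ 2 + 2 * (δ * ((⟪b, a⟫).re - (z * ⟪b, p⟫).re)) + ‖w‖ ^ 2 := by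
    rw [← hTx']
    have h0 := norm_add_sq (𝕜 := ℂ) b w
    have hbw : (⟪b, w⟫ : ℂ) = (δ : ℂ) * (⟪b, a⟫ - z * ⟪b, p⟫) := by
      rw [hw, inner_smul_right, inner_sub_right, inner_smul_right]
    have h2 : (RCLike.re (⟪b, w⟫ : ℂ)) = δ * ((⟪b, a⟫).re - (z * ⟪b, p⟫).re) := by
      rw [hbw]
      simp [Complex.re_ofReal_mul]
    rw [h2] at h0
    exact h0
  have hform' : -γ * ‖q‖ ^ 2 ≤ 2 * (⟪b, a⟫).re := by
    have h1 := hform φ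
    have h2 : ((⟪a, b⟫ : ℂ) + ⟪b, a⟫).re = 2 * (⟪b, a⟫).re := by
      rw [Complex.add_re]
      have h3 : (⟪a, b⟫ : ℂ).re = (⟪b, a⟫ : ℂ).re := by
        rw [← inner_conj_symm b a, Complex.conj_re]
      rw [h3]; ring
    rw [← hq] at h1
    rw [h2] at h1
    exact h1
  have hbq : (⟪b, p⟫ : ℂ) = ⟪b, q⟫ := by
    have h0 : (⟪b, P p⟫ : ℂ) = 0 := by
      rw [← hsymm b p]
      have hPb : P b = 0 := by rw [hb]; exact hPBz p
      rw [hPb, inner_zero_left]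
    rw [hq, inner_sub_right, h0, sub_zero]
  have hcross : |(z * ⟪b, p⟫).re| ≤ ‖z‖ * (‖b‖ * ‖q‖) := by
    calc |(z * ⟪b, p⟫).re| ≤ ‖z * ⟪b, p⟫‖ := Complex.abs_re_le_norm _
      _ = ‖z‖ * ‖(⟪b, p⟫ : ℂ)‖ := norm_mul _ _
      _ ≤ ‖z‖ * (‖b‖ * ‖q‖) := by
          refine mul_le_mul_of_nonneg_left ?_ (norm_nonneg z)
          rw [hbq]
          exact norm_inner_le_norm b q
  have hQb : ‖q‖ ≤ M * ‖b‖ := hQle p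
  have hδsmall : δ * (γ * M ^ 2 + 2 * ‖z‖ * M) ≤ 1 / 2 := by
    have hKpos : (0 : ℝ) < 2 * (γ * M ^ 2 + 2 * ‖z‖ * M + 1) := by positivity
    have h1 : δ * (2 * (γ * M ^ 2 + 2 * ‖z‖ * M + 1)) < 1 :=
      (lt_div_iff₀ hKpos).mp hδ1
    nlinarith [hδ0.le]
  -- reduce to pure real arithmetic
  have hb2 : ‖b‖ ^ 2 ≤ 2 * ‖η‖ ^ 2 := by
    have hq2 : ‖q‖ ^ 2 ≤ M ^ 2 * ‖b‖ ^ 2 := by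
      nlinarith [hQb, norm_nonneg q, norm_nonneg b, hM0]
    have hbqle : ‖b‖ * ‖q‖ ≤ M * ‖b‖ ^ 2 := by nlinarith [hQb, norm_nonneg b]
    have hz1 : (z * ⟪b, p⟫).re ≤ ‖z‖ * (M * ‖b‖ ^ 2) := by
      have h4 := le_abs_self ((z * ⟪b, p⟫).re)
      nlinarith [hcross, mul_le_mul_of_nonneg_left hbqle (norm_nonneg z)]
    have hr1 : -γ * (M ^ 2 * ‖b‖ ^ 2) ≤ 2 * (⟪b, a⟫).re := by
      nlinarith [hform', hq2, hγ]
    have hsmall' : δ * (γ * M ^ 2 + 2 * ‖z‖ * M) * ‖b‖ ^ 2 ≤ (1 / 2) * ‖b‖ ^ 2 :=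
      mul_le_mul_of_nonneg_right hδsmall (sq_nonneg _)
    nlinarith [hexp, sq_nonneg ‖w‖, mul_le_mul_of_nonneg_left hr1 hδ0.le,
      mul_le_mul_of_nonneg_left hz1 hδ0.le, hsmall']
  have hgoal2 : ‖q‖ ^ 2 ≤ (2 * M * ‖η‖) ^ 2 := by
    nlinarith [hQb, hb2, norm_nonneg b, norm_nonneg q, hM0, norm_nonneg η,
      sq_nonneg (M * ‖b‖)]
  have happ : ((1 - P) ∘L R) η = q := by rw [hq, hp]; rfl
  rw [happ]
  have h2M : (0 : ℝ) ≤ 2 * M * ‖η‖ := by positivity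
  have := Real.sqrt_le_sqrt hgoal2
  rwa [Real.sqrt_sq (norm_nonneg q), Real.sqrt_sq h2M] at this
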